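/- arXiv:2112.02349 — 2 statements merged into one kernel-verified Lean document; each statement's English description precedes it below -/
import Mathlib

section
/- In a localic quantale (one whose underlying suplattice satisfies the infinite distributive law of binary meets over arbitrary joins), if each element of a family S of quantale elements is G-covariant for a group action φ on the module, then the supremum of S is G-covariant. Here T is G-compatible if φ_g(T ▸ X) = T ▸ φ_g(X) for all g and X, and S is G-covariant if every T ≤ S is G-compatible. -/
/-- In a localic quantale acting on a suplattice, with a group `G` acting by
suplattice automorphisms `φ : G →* (X ≃o X)`: if every element of a family `S` of
quantale elements is `G`-covariant (i.e. every element below it is `G`-compatible,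
meaning `φ g (T ▸ x) = T ▸ (φ g x)` for all `g, x`), then `⋁ S` is `G`-covariant. -/
theorem sSup_covariant {Q X : Type*} [CompleteLattice Q] [Monoid Q] [CompleteLattice X]
    {G : Type*} [Group G]
    (act : Q → X → X)
    (hcomp : ∀ (S T : Q) (Y : X), act S (act T Y) = act (S * T) Y)
    (hsupX : ∀ (T : Q) (𝒵 : Set X), act T (sSup 𝒵) = ⨆ Z ∈ 𝒵, act T Z)
    (hsupQ : ∀ (𝒮 : Set Q) (Y : X), act (sSup 𝒮) Y = ⨆ S ∈ 𝒮, act S Y)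
    (hone : ∀ Y : X, act 1 Y = Y)
    (hlocale : ∀ (a : Q) (s : Set Q), a ⊓ sSup s = ⨆ b ∈ s, a ⊓ b)
    (φ : G →* (X ≃o X))
    (S : Set Q)
    (hS : ∀ T ∈ S, ∀ T' ≤ T, ∀ (g : G) (x : X), φ g (act T' x) = act T' (φ g x)) :
    ∀ T' ≤ sSup S, ∀ (g : G) (x : X), φ g (act T' x) = act T' (φ g x) := by
  intro T' hT' g x
  have hT'eq : T' = sSup ((fun b => T' ⊓ b) '' S) := by
    rw [sSup_image, ← hlocale]
    exact (inf_eq_left.mpr hT').symm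
  rw [hT'eq, hsupQ, hsupQ, iSup_image, iSup_image]
  rw [(φ g).map_iSup]
  refine iSup_congr fun T => ?_
  rw [(φ g).map_iSup]
  exact iSup_congr fun hTS => hS T hTS (T' ⊓ T) inf_le_right g x
end

section
/- The entrywise ceiling map from probabilistic to possibilistic matrices is a monotone of distinguishability orderings: if x, y are stochastic matrices and y = t x for some stochastic matrix t, then ceil(y) = ceil(t) · ceil(x) where the product on the right is taken in the Boolean semiring; in particular, whenever no Boolean-stochastic matrix u satisfies ceil(y) = u · ceil(x) over the Boolean semiring, then no stochastic t with y = t x exists. -/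
/-! Over nonnegative entries a sum vanishes only when every summand does, so the support of
`t * x` is the Boolean product of the supports of `t` and `x`. A stochastic `t` has a nonzero
entry in every column, so its support is a Boolean-stochastic witness for the second part. -/

open Finset

theorem Matrix.mul_apply_ne_zero_iff_of_nonneg {l m n α : Type*} [Fintype m]
    [Semiring α] [PartialOrder α] [IsOrderedRing α] [NoZeroDivisors α]
    {A : Matrix l m α} {B : Matrix m n α} (hA : ∀ i k, 0 ≤ A i k) (hB : ∀ k j, 0 ≤ B k j)
    (i : l) (j : n) : (A * B) i j ≠ 0 ↔ ∃ k, A i k ≠ 0 ∧ B k j ≠ 0 := by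
  rw [Matrix.mul_apply, Ne,
    sum_eq_zero_iff_of_nonneg fun k _ => mul_nonneg (hA i k) (hB k j)]
  simp only [mem_univ, true_implies, not_forall, mul_eq_zero, not_or]

theorem exists_ne_zero_of_sum_eq_one {ι α : Type*} [Fintype ι] [AddCommMonoid α] [One α]
    [NeZero (1 : α)] {f : ι → α} (hf : ∑ i, f i = 1) : ∃ i, f i ≠ 0 := by
  obtain ⟨i, -, hi⟩ := exists_ne_zero_of_sum_ne_zero (hf ▸ one_ne_zero)
  exact ⟨i, hi⟩

theorem ceiling_monotone_possibilistic_general {n m h : ℕ}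
    (x : Matrix (Fin n) (Fin h) ℝ) (y : Matrix (Fin m) (Fin h) ℝ)
    (hx_nonneg : ∀ i j, 0 ≤ x i j) :
    (∀ t : Matrix (Fin m) (Fin n) ℝ, (∀ i j, 0 ≤ t i j) → (∀ j, ∑ i, t i j = 1) →
      y = t * x → ∀ i j, (y i j ≠ 0 ↔ ∃ k, t i k ≠ 0 ∧ x k j ≠ 0)) ∧
    ((¬ ∃ u : Fin m → Fin n → Prop, (∀ j, ∃ i, u i j) ∧
        ∀ i j, (y i j ≠ 0 ↔ ∃ k, u i k ∧ x k j ≠ 0)) →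
      ¬ ∃ t : Matrix (Fin m) (Fin n) ℝ,
        (∀ i j, 0 ≤ t i j) ∧ (∀ j, ∑ i, t i j = 1) ∧ y = t * x) := by
  refine ⟨fun t ht _ hy => hy ▸ Matrix.mul_apply_ne_zero_iff_of_nonneg ht hx_nonneg, ?_⟩
  rintro hno ⟨t, ht, ht_col, rfl⟩
  exact hno ⟨fun i k => t i k ≠ 0, fun j => exists_ne_zero_of_sum_eq_one (ht_col j),
    Matrix.mul_apply_ne_zero_iff_of_nonneg ht hx_nonneg⟩

/-- The entrywise ceiling map (sending an entry to `1` iff it is nonzero, here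
represented by the proposition `≠ 0`) from probabilistic to possibilistic matrices is
a monotone of distinguishability orderings: if `y = t * x` for stochastic matrices,
then `ceil y = ceil t ⬝ ceil x` over the Boolean semiring (where the Boolean matrix
product of `u` and `v` has `(i,j)` entry `∃ k, u i k ∧ v k j`); in particular, if no
Boolean-stochastic matrix `u` (every column containing at least one `1`) satisfies
`ceil y = u ⬝ ceil x`, then no stochastic `t` with `y = t * x` exists. -/
theorem ceiling_monotone_possibilistic {n m h : ℕ}
    (x : Matrix (Fin n) (Fin h) ℝ) (y : Matrix (Fin m) (Fin h) ℝ)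
    (hx_nonneg : ∀ i j, 0 ≤ x i j) (hx_col : ∀ j, ∑ i, x i j = 1)
    (hy_nonneg : ∀ i j, 0 ≤ y i j) (hy_col : ∀ j, ∑ i, y i j = 1) :
    (∀ t : Matrix (Fin m) (Fin n) ℝ, (∀ i j, 0 ≤ t i j) → (∀ j, ∑ i, t i j = 1) →
      y = t * x → ∀ i j, (y i j ≠ 0 ↔ ∃ k, t i k ≠ 0 ∧ x k j ≠ 0)) ∧
    ((¬ ∃ u : Fin m → Fin n → Prop, (∀ j, ∃ i, u i j) ∧
        ∀ i j, (y i j ≠ 0 ↔ ∃ k, u i k ∧ x k j ≠ 0)) →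
      ¬ ∃ t : Matrix (Fin m) (Fin n) ℝ,
        (∀ i j, 0 ≤ t i j) ∧ (∀ j, ∑ i, t i j = 1) ∧ y = t * x) :=
  ceiling_monotone_possibilistic_general x y hx_nonneg
end
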